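/- For a distributive family {π^i_j : B_i → B_{ij}}_{i≠j∈J} of algebra homomorphisms with J finite, the following are equivalent: (1) the family satisfies the cocycle condition; (2) for any proper subset K ⊊ J, any k ∈ J∖K, and any family (b_l)_{l∈K} with π^i_j(b_i) = π^j_i(b_j) for all distinct i,j ∈ K, there exists b_k ∈ B_k with π^l_k(b_l) = π^k_l(b_k) for all l ∈ K; (3) the two-element extension property: for all distinct i,j,k and compatible (b_i,b_j) there exists b_k compatible with both. -/

import Mathlib

/-!
Extending a compatible family `(b_l)_{l ∈ K}` to `k ∉ K` is done one index at a time. If `c ∈ B_k`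
is compatible with the `b_l` for `l ∈ K` and `d ∈ B_k` is compatible with `b_m`, the second cocycle
condition, applied to each triangle `k, l, m`, puts `c - d` in `ker π^k_l + ker π^k_m`.
Distributivity of the kernels in `B_k` upgrades this to `c - d = u + v` with
`u ∈ ⋂_{l ∈ K} ker π^k_l` and `v ∈ ker π^k_m`, and then `c - u = d + v` is compatible with all of
`K ∪ {m}`. Conversely, extending pairs by zero shows that `π^i_j (ker π^i_k)` and
`π^j_i (ker π^j_k)` contain each other, and extending a corrected pair `(b_j', b_k)` gives the
second cocycle condition.
-/

open Function

/-- A set of ideals *generates a distributive lattice* iff it is contained in a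
distributive sublattice of the lattice of ideals. -/
def GeneratesDistribLattice {A : Type*} [CommRing A] (s : Set (Ideal A)) : Prop :=
  ∃ L : Sublattice (Ideal A), (∀ I ∈ s, I ∈ L) ∧
    ∀ x ∈ L, ∀ y ∈ L, ∀ z ∈ L, x ⊓ (y ⊔ z) = (x ⊓ y) ⊔ (x ⊓ z)

variable {J : Type*}

/-- Compatibility of `b i` and `b j`: `π^i_j (b i) = π^j_i (b j)`, where the
identification `B_{ij} = B_{ji}` is witnessed by the ring isomorphisms `e`. -/
def Compat (B : J → Type*) [∀ i, CommRing (B i)] (C : J → J → Type*)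
    [∀ i j, CommRing (C i j)] (π : ∀ i j, B i →+* C i j)
    (e : ∀ i j, C i j ≃+* C j i) (i j : J) (bi : B i) (bj : B j) : Prop :=
  π i j bi = e j i (π j i bj)

/-- A *distributive family*: all the homomorphisms `π^i_j` are surjective and, for each
`i`, the kernels `ker π^i_j` generate a distributive lattice of ideals of `B i`. -/
def DistribFamily (B : J → Type*) [∀ i, CommRing (B i)] (C : J → J → Type*)
    [∀ i j, CommRing (C i j)] (π : ∀ i j, B i →+* C i j) : Prop :=
  (∀ i j, i ≠ j → Surjective (π i j)) ∧
  ∀ i : J, GeneratesDistribLattice {I : Ideal (B i) | ∃ j, j ≠ i ∧ I = RingHom.ker (π i j)}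

/-- The first cocycle condition: `π^i_j (ker π^i_k) = π^j_i (ker π^j_k)` for all
distinct `i, j, k` (the right-hand side is transported to `C i j` by `e`). -/
def Cocycle1 (B : J → Type*) [∀ i, CommRing (B i)] (C : J → J → Type*)
    [∀ i j, CommRing (C i j)] (π : ∀ i j, B i →+* C i j)
    (e : ∀ i j, C i j ≃+* C j i) : Prop :=
  ∀ i j k : J, i ≠ j → i ≠ k → j ≠ k →
    Ideal.map (π i j) (RingHom.ker (π i k)) =
      Ideal.map ((e j i).toRingHom.comp (π j i)) (RingHom.ker (π j k))

/-- The second cocycle condition `φ^{ik}_j = φ^{ij}_k ∘ φ^{jk}_i`, expressed elementwise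
via the characterization
`φ^{ij}_k ([b_j]^j_{ik}) = [b_i]^i_{jk} ↔ π^i_j(b_i) - π^j_i(b_j) ∈ π^i_j(ker π^i_k)`. -/
def Cocycle2 (B : J → Type*) [∀ i, CommRing (B i)] (C : J → J → Type*)
    [∀ i j, CommRing (C i j)] (π : ∀ i j, B i →+* C i j)
    (e : ∀ i j, C i j ≃+* C j i) : Prop :=
  ∀ i j k : J, i ≠ j → i ≠ k → j ≠ k → ∀ (bi : B i) (bj : B j) (bk : B k),
    π j k bj - e k j (π k j bk) ∈ Ideal.map (π j k) (RingHom.ker (π j i)) →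
    π i j bi - e j i (π j i bj) ∈ Ideal.map (π i j) (RingHom.ker (π i k)) →
    π i k bi - e k i (π k i bk) ∈ Ideal.map (π i k) (RingHom.ker (π i j))

/-- The cocycle condition of Calow–Matthes. -/
def CocycleCondition (B : J → Type*) [∀ i, CommRing (B i)] (C : J → J → Type*)
    [∀ i j, CommRing (C i j)] (π : ∀ i j, B i →+* C i j)
    (e : ∀ i j, C i j ≃+* C j i) : Prop :=
  Cocycle1 B C π e ∧ Cocycle2 B C π e

/-- The two-element extension property: every compatible pair `(b_i, b_j)` extends by
some `b_k` compatible with both. -/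
def ExtendsPairs (B : J → Type*) [∀ i, CommRing (B i)] (C : J → J → Type*)
    [∀ i j, CommRing (C i j)] (π : ∀ i j, B i →+* C i j)
    (e : ∀ i j, C i j ≃+* C j i) : Prop :=
  ∀ i j k : J, i ≠ j → i ≠ k → j ≠ k → ∀ (bi : B i) (bj : B j),
    Compat B C π e i j bi bj →
    ∃ bk : B k, Compat B C π e i k bi bk ∧ Compat B C π e j k bj bk

namespace Sublattice

variable {α ι : Type*} [Lattice α] {L : Sublattice α}

lemma inf_sup_right_of_distrib (hL : ∀ x ∈ L, ∀ y ∈ L, ∀ z ∈ L, x ⊓ (y ⊔ z) = x ⊓ y ⊔ x ⊓ z)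
    {x y z : α} (hx : x ∈ L) (hy : y ∈ L) (hz : z ∈ L) :
    x ⊓ y ⊔ z = (x ⊔ z) ⊓ (y ⊔ z) := by
  rw [hL _ (L.supClosed hx hz) _ hy _ hz, inf_eq_right.2 (le_sup_right : z ≤ x ⊔ z),
    inf_comm (x ⊔ z) y, hL _ hy _ hx _ hz, inf_comm y x, sup_assoc,
    sup_eq_right.2 (inf_le_right : y ⊓ z ≤ z)]

lemma finset_inf'_sup_distrib_right
    (hL : ∀ x ∈ L, ∀ y ∈ L, ∀ z ∈ L, x ⊓ (y ⊔ z) = x ⊓ y ⊔ x ⊓ z)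
    {s : Finset ι} (hs : s.Nonempty) {f : ι → α} {z : α} (hf : ∀ i ∈ s, f i ∈ L) (hz : z ∈ L) :
    s.inf' hs f ⊔ z = s.inf' hs fun i => f i ⊔ z := by
  induction hs using Finset.Nonempty.cons_induction with
  | singleton a => simp
  | cons a s ha hs ih =>
    have hfs : ∀ i ∈ s, f i ∈ L := fun i hi => hf i (Finset.mem_cons_of_mem hi)
    rw [Finset.inf'_cons hs, Finset.inf'_cons hs,
      inf_sup_right_of_distrib hL (hf a (Finset.mem_cons_self a s))
        (L.infClosed.finsetInf'_mem hs hfs) hz, ih hfs]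

end Sublattice

section Family

variable {B : J → Type*} [∀ i, CommRing (B i)] {C : J → J → Type*} [∀ i j, CommRing (C i j)]
  {π : ∀ i j, B i →+* C i j} {e : ∀ i j, C i j ≃+* C j i} {i j k : J}

lemma Compat.symm (he : ∀ i j, e j i = (e i j).symm) {bi : B i} {bj : B j}
    (h : Compat B C π e i j bi bj) : Compat B C π e j i bj bi := by
  rw [Compat, h, he i j, RingEquiv.apply_symm_apply]

lemma compat_zero_iff {b : B i} : Compat B C π e i j b 0 ↔ b ∈ RingHom.ker (π i j) := by
  simp [Compat]

lemma Compat.sub_mem_ker {a a' : B i} {b : B j} (h : Compat B C π e i j a b)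
    (h' : Compat B C π e i j a' b) : a - a' ∈ RingHom.ker (π i j) :=
  (RingHom.sub_mem_ker_iff _).2 (h.trans (Eq.symm h'))

lemma compat_congr_right {a : B i} {b b' : B j} (h : b - b' ∈ RingHom.ker (π j i)) :
    Compat B C π e i j a b ↔ Compat B C π e i j a b' := by
  rw [Compat, Compat, (RingHom.sub_mem_ker_iff _).1 h]

lemma sub_mem_map_ker_iff (hsurj : Surjective (π i k)) {b : B i} {bk : B k} :
    π i k b - e k i (π k i bk) ∈ Ideal.map (π i k) (RingHom.ker (π i j)) ↔
      ∃ b', b - b' ∈ RingHom.ker (π i j) ∧ Compat B C π e i k b' bk := by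
  rw [Ideal.mem_map_iff_of_surjective _ hsurj]
  constructor
  · rintro ⟨x, hx, hxb⟩
    refine ⟨b - x, by rwa [sub_sub_cancel], ?_⟩
    rw [Compat, map_sub, hxb, sub_sub_cancel]
  · rintro ⟨b', hb', hcompat⟩
    refine ⟨b - b', hb', ?_⟩
    rw [map_sub, ← hcompat]

lemma Compat.sub_mem_map_ker {b : B i} {bk : B k} (h : Compat B C π e i k b bk) :
    π i k b - e k i (π k i bk) ∈ Ideal.map (π i k) (RingHom.ker (π i j)) := by
  rw [← h, sub_self]
  exact zero_mem _

lemma DistribFamily.mem_finsetInf_sup_of_forall_mem_sup (hdist : DistribFamily B C π)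
    {k m : J} (hmk : m ≠ k) {K : Finset J} (hK : k ∉ K) {x : B k}
    (hx : ∀ l ∈ K, x ∈ RingHom.ker (π k l) ⊔ RingHom.ker (π k m)) :
    x ∈ (K.inf fun l => RingHom.ker (π k l)) ⊔ RingHom.ker (π k m) := by
  rcases K.eq_empty_or_nonempty with rfl | hne
  · simp
  obtain ⟨L, hL, hdistrib⟩ := hdist.2 k
  have hker : ∀ l, l ≠ k → RingHom.ker (π k l) ∈ L := fun l hl => hL _ ⟨l, hl, rfl⟩
  rw [← Finset.inf'_eq_inf hne, Sublattice.finset_inf'_sup_distrib_right hdistrib hne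
    (fun l hl => hker l (ne_of_mem_of_not_mem hl hK)) (hker m hmk), Finset.inf'_eq_inf,
    Submodule.mem_finsetInf]
  exact hx

lemma Cocycle2.sub_mem_ker_sup_ker (hsurj : ∀ i j, i ≠ j → Surjective (π i j))
    (h2 : Cocycle2 B C π e) {k l m : J} (hkl : k ≠ l) (hkm : k ≠ m) (hlm : l ≠ m)
    {c d : B k} {bl : B l} {bm : B m} (hc : Compat B C π e k l c bl)
    (hd : Compat B C π e k m d bm) (hlm' : Compat B C π e l m bl bm) :
    c - d ∈ RingHom.ker (π k l) ⊔ RingHom.ker (π k m) := by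
  obtain ⟨c', hc', hc'm⟩ := (sub_mem_map_ker_iff (hsurj k m hkm)).1
    (h2 k l m hkl hkm hlm c bl bm hlm'.sub_mem_map_ker hc.sub_mem_map_ker)
  rw [← sub_add_sub_cancel c c' d]
  exact Submodule.add_mem_sup hc' (hc'm.sub_mem_ker hd)

lemma ExtendsPairs.exists_mem_ker_compat (he : ∀ i j, e j i = (e i j).symm)
    (hEP : ExtendsPairs B C π e) (hij : i ≠ j) (hik : i ≠ k) (hjk : j ≠ k)
    {bi : B i} (hbi : bi ∈ RingHom.ker (π i k)) :
    ∃ bj ∈ RingHom.ker (π j k), Compat B C π e i j bi bj := by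
  obtain ⟨bj, hij', hkj⟩ := hEP i k j hik hij hjk.symm bi 0 (compat_zero_iff.2 hbi)
  exact ⟨bj, compat_zero_iff.1 (hkj.symm he), hij'⟩

lemma ExtendsPairs.cocycle1 (he : ∀ i j, e j i = (e i j).symm)
    (hEP : ExtendsPairs B C π e) : Cocycle1 B C π e := by
  intro i j k hij hik hjk
  apply le_antisymm <;> rw [Ideal.map_le_iff_le_comap]
  · intro bi hbi
    obtain ⟨bj, hbj, hcompat⟩ := hEP.exists_mem_ker_compat he hij hik hjk hbi
    rw [Ideal.mem_comap, hcompat]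
    exact Ideal.mem_map_of_mem ((e j i).toRingHom.comp (π j i)) hbj
  · intro bj hbj
    obtain ⟨bi, hbi, hcompat⟩ := hEP.exists_mem_ker_compat he hij.symm hjk hik hbj
    rw [Ideal.mem_comap]
    change e j i (π j i bj) ∈ _
    rw [← hcompat.symm he]
    exact Ideal.mem_map_of_mem _ hbi

lemma ExtendsPairs.cocycle2 (he : ∀ i j, e j i = (e i j).symm)
    (hsurj : ∀ i j, i ≠ j → Surjective (π i j))
    (hEP : ExtendsPairs B C π e) : Cocycle2 B C π e := by
  intro i j k hij hik hjk bi bj bk hj hi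
  obtain ⟨bj', hbj, hjk'⟩ := (sub_mem_map_ker_iff (hsurj j k hjk)).1 hj
  obtain ⟨bi', hbi, hij'⟩ := (sub_mem_map_ker_iff (hsurj i j hij)).1 hi
  obtain ⟨bi'', hji, hki⟩ := hEP j k i hjk hij.symm hik.symm bj' bk hjk'
  have hbi' : bi' - bi'' ∈ RingHom.ker (π i j) :=
    ((compat_congr_right hbj).1 hij').sub_mem_ker (hji.symm he)
  have key := (sub_mem_map_ker_iff (hsurj i k hik)).2 ⟨bi'', hbi', hki.symm he⟩
  rwa [← (RingHom.sub_mem_ker_iff _).1 hbi] at key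

lemma Cocycle2.exists_compat_of_pairwise_compat (he : ∀ i j, e j i = (e i j).symm)
    (hdist : DistribFamily B C π)
    (h2 : Cocycle2 B C π e) {k : J} (K : Finset J) (hk : k ∉ K) (b : ∀ l, B l)
    (hb : ∀ i ∈ K, ∀ j ∈ K, i ≠ j → Compat B C π e i j (b i) (b j)) :
    ∃ bk : B k, ∀ l ∈ K, Compat B C π e l k (b l) bk := by
  classical
  induction K using Finset.induction_on with
  | empty => exact ⟨0, by simp⟩
  | @insert m K hm ih =>
    have hkm : k ≠ m := fun h => hk (h ▸ Finset.mem_insert_self m K)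
    have hkK : k ∉ K := fun h => hk (Finset.mem_insert_of_mem h)
    obtain ⟨c, hc⟩ := ih hkK fun i hi j hj hij =>
      hb i (Finset.mem_insert_of_mem hi) j (Finset.mem_insert_of_mem hj) hij
    obtain ⟨d, hd⟩ : ∃ d, Compat B C π e k m d (b m) := hdist.1 k m hkm _
    have hcd : c - d ∈ (K.inf fun l => RingHom.ker (π k l)) ⊔ RingHom.ker (π k m) := by
      refine hdist.mem_finsetInf_sup_of_forall_mem_sup hkm.symm hkK fun l hl => ?_
      have hlm : l ≠ m := fun h => hm (h ▸ hl)
      exact h2.sub_mem_ker_sup_ker hdist.1 (ne_of_mem_of_not_mem hl hkK).symm hkm hlm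
        ((hc l hl).symm he) hd
        (hb l (Finset.mem_insert_of_mem hl) m (Finset.mem_insert_self m K) hlm)
    obtain ⟨u, hu, v, hv, huv⟩ := Submodule.mem_sup.1 hcd
    refine ⟨c - u, fun l hl => ?_⟩
    rcases Finset.mem_insert.1 hl with rfl | hl
    · refine (compat_congr_right ?_).1 (hd.symm he)
      rw [show d - (c - u) = -v by linear_combination huv]
      exact neg_mem hv
    · refine (compat_congr_right ?_).1 (hc l hl)
      rw [sub_sub_cancel]
      exact (Finset.inf_le hl : K.inf (fun l => RingHom.ker (π k l)) ≤ _) hu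

lemma extendsPairs_of_forall_exists_compat [Fintype J] (he : ∀ i j, e j i = (e i j).symm)
    (hext : ∀ K : Finset J, K ≠ Finset.univ → ∀ k ∉ K, ∀ b : ∀ l, B l,
      (∀ i ∈ K, ∀ j ∈ K, i ≠ j → Compat B C π e i j (b i) (b j)) →
      ∃ bk : B k, ∀ l ∈ K, Compat B C π e l k (b l) bk) :
    ExtendsPairs B C π e := by
  classical
  intro i j k hij hik hjk bi bj hcompat
  let b : ∀ l, B l := Function.update (Function.update 0 i bi) j bj
  have hbi : b i = bi := by simp [b, hij]
  have hbj : b j = bj := by simp [b]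
  have hk : k ∉ ({i, j} : Finset J) := by simp [hik.symm, hjk.symm]
  obtain ⟨bk, hbk⟩ := hext {i, j} (fun h => hk (h ▸ Finset.mem_univ k)) k hk b (by
    simp only [Finset.mem_insert, Finset.mem_singleton]
    rintro l (rfl | rfl) m (rfl | rfl) hlm
    · exact absurd rfl hlm
    · rw [hbi, hbj]; exact hcompat
    · rw [hbi, hbj]; exact hcompat.symm he
    · exact absurd rfl hlm)
  refine ⟨bk, ?_, ?_⟩
  · simpa [hbi] using hbk i (by simp)
  · simpa [hbj] using hbk j (by simp)

end Family

theorem stmt4_general [Fintype J] (B : J → Type*) [∀ i, CommRing (B i)]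
    (C : J → J → Type*) [∀ i j, CommRing (C i j)]
    (π : ∀ i j, B i →+* C i j) (e : ∀ i j, C i j ≃+* C j i)
    (he : ∀ i j, e j i = (e i j).symm)
    (hdist : DistribFamily B C π) :
    (CocycleCondition B C π e ↔
      (∀ K : Finset J, K ≠ Finset.univ → ∀ k ∉ K, ∀ b : ∀ l, B l,
        (∀ i ∈ K, ∀ j ∈ K, i ≠ j → Compat B C π e i j (b i) (b j)) →
        ∃ bk : B k, ∀ l ∈ K, Compat B C π e l k (b l) bk)) ∧
    (CocycleCondition B C π e ↔ ExtendsPairs B C π e) := by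
  have hcocycle_ext : CocycleCondition B C π e → ∀ K : Finset J, K ≠ Finset.univ → ∀ k ∉ K,
      ∀ b : ∀ l, B l, (∀ i ∈ K, ∀ j ∈ K, i ≠ j → Compat B C π e i j (b i) (b j)) →
        ∃ bk : B k, ∀ l ∈ K, Compat B C π e l k (b l) bk :=
    fun h K _ _ hk => h.2.exists_compat_of_pairwise_compat he hdist K hk
  have hpairs_cocycle : ExtendsPairs B C π e → CocycleCondition B C π e := fun hEP =>
    ⟨hEP.cocycle1 he, hEP.cocycle2 he hdist.1⟩
  exact ⟨⟨hcocycle_ext, fun h => hpairs_cocycle (extendsPairs_of_forall_exists_compat he h)⟩,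
    ⟨fun h => extendsPairs_of_forall_exists_compat he (hcocycle_ext h), hpairs_cocycle⟩⟩

/-- the main theorem: for a distributive family, the cocycle condition,
the one-point extension property for partial multi-pullbacks over any proper subset,
and the two-element extension property are all equivalent. -/
theorem stmt4 [Fintype J] [DecidableEq J] (B : J → Type*) [∀ i, CommRing (B i)]
    (C : J → J → Type*) [∀ i j, CommRing (C i j)]
    (π : ∀ i j, B i →+* C i j) (e : ∀ i j, C i j ≃+* C j i)
    (he : ∀ i j, e j i = (e i j).symm)
    (hdist : DistribFamily B C π) :
    (CocycleCondition B C π e ↔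
      (∀ K : Finset J, K ≠ Finset.univ → ∀ k ∉ K, ∀ b : ∀ l, B l,
        (∀ i ∈ K, ∀ j ∈ K, i ≠ j → Compat B C π e i j (b i) (b j)) →
        ∃ bk : B k, ∀ l ∈ K, Compat B C π e l k (b l) bk)) ∧
    (CocycleCondition B C π e ↔ ExtendsPairs B C π e) :=
  stmt4_general B C π e he hdist
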